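/- Let d ∈ ℕ and let n⁰', n⁰ ∈ ℕ^p satisfy n⁰' ≥ n⁰ componentwise. Then for all n⁻, n⁺ ∈ ℕ^p, k_d(n⁻, n⁰', n⁺) ≤ k_d(n⁻, n⁰, n⁺): the BART sub-correlation function is monotonically non-increasing in the interior split counts. -/

import Mathlib

/-!
Unfold `k_d = 1 - P_d * (1 - Q_d)`, where `Q_d` (`bartSplitAverage`) is the `w`-weighted
average, over the axes with `n_i ≠ 0`, of `(1 / n_i)` times the sum of `k_{d+1}` over the
`n⁻_i + n⁺_i` exterior split positions (interior positions separate the two points and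
contribute `0`). Raising `n⁰` only enlarges the normalisers `W(n)` and `n_i`, while the
summands, which lie in `[0, 1]` and by induction along the recursion are themselves antitone
in `n⁰`, can only decrease. Axes that become active contribute nothing, having no exterior
positions. Hence `Q_d` decreases, and so does `k_d`.
-/

/-- Total weight `W(v) = Σ_{i : v_i ≠ 0} w_i` of the axes with at least one available split. -/
noncomputable def bartW (p : ℕ) (w : Fin p → ℝ) (v : Fin p → ℕ) : ℝ :=
  ∑ i ∈ Finset.univ.filter (fun i => v i ≠ 0), w i

/-- The BART sub-correlation function `k_d(n⁻, n⁰, n⁺)`, defined by well-founded recursion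
on `Σ_i (n⁻_i + n⁺_i)`. -/
noncomputable def bartK (p : ℕ) (w : Fin p → ℝ) (P : ℕ → ℝ)
    (d : ℕ) (nm n0 np : Fin p → ℕ) : ℝ :=
  if ∀ i, nm i + n0 i + np i = 0 then 1
  else
    1 - P d * (1 - (1 / bartW p w (fun i => nm i + n0 i + np i)) *
      ∑ i ∈ Finset.univ.filter (fun i => nm i + n0 i + np i ≠ 0),
        (w i / ((nm i + n0 i + np i : ℕ) : ℝ)) *
          ((∑ k ∈ (Finset.range (nm i)).attach,
              bartK p w P (d+1) (Function.update nm i k.1) n0 np) +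
           (∑ k ∈ (Finset.range (np i)).attach,
              bartK p w P (d+1) nm n0 (Function.update np i k.1))))
termination_by ∑ i, (nm i + np i)
decreasing_by
  · have hk : k.1 < nm i := Finset.mem_range.mp k.2
    refine Finset.sum_lt_sum (fun j _ => ?_) ⟨i, Finset.mem_univ i, ?_⟩
    · rcases eq_or_ne j i with rfl | hj
      · simp only [Function.update_self]; omega
      · simp only [Function.update_of_ne hj]; omega
    · simp only [Function.update_self]; omega
  · have hk : k.1 < np i := Finset.mem_range.mp k.2
    refine Finset.sum_lt_sum (fun j _ => ?_) ⟨i, Finset.mem_univ i, ?_⟩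
    · rcases eq_or_ne j i with rfl | hj
      · simp only [Function.update_self]; omega
      · simp only [Function.update_of_ne hj]; omega
    · simp only [Function.update_self]; omega

open Finset

section
variable {p : ℕ} {w : Fin p → ℝ} {P : ℕ → ℝ}

lemma bartW_pos (hw : ∀ i, 0 < w i) {v : Fin p → ℕ} (h : ¬ ∀ i, v i = 0) :
    0 < bartW p w v := by
  obtain ⟨i, hi⟩ := not_forall.mp h
  exact sum_pos (fun j _ => hw j) ⟨i, mem_filter.mpr ⟨mem_univ i, hi⟩⟩

lemma sum_attach_mem_Icc_card {α : Type*} {s : Finset α} {f : s → ℝ}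
    (hf : ∀ k, f k ∈ Set.Icc 0 1) : ∑ k ∈ s.attach, f k ∈ Set.Icc 0 (#s : ℝ) := by
  refine ⟨sum_nonneg fun k _ => (hf k).1, ?_⟩
  simpa using sum_le_card_nsmul s.attach f 1 fun k _ => (hf k).2

lemma one_div_sum_mul_sum_mem_Icc {ι : Type*} {s : Finset ι} {f g : ι → ℝ}
    (hf : ∀ i ∈ s, f i ∈ Set.Icc 0 (g i)) :
    1 / (∑ i ∈ s, g i) * ∑ i ∈ s, f i ∈ Set.Icc 0 1 := by
  have hf0 : 0 ≤ ∑ i ∈ s, f i := sum_nonneg fun i hi => (hf i hi).1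
  have hfg : ∑ i ∈ s, f i ≤ ∑ i ∈ s, g i := sum_le_sum fun i hi => (hf i hi).2
  rw [one_div_mul_eq_div]
  exact ⟨div_nonneg hf0 (hf0.trans hfg), div_le_one_of_le₀ hfg (hf0.trans hfg)⟩

noncomputable def bartAxisTerm (p : ℕ) (w : Fin p → ℝ) (P : ℕ → ℝ) (d : ℕ)
    (nm n0 np : Fin p → ℕ) (i : Fin p) : ℝ :=
  w i / ((nm i + n0 i + np i : ℕ) : ℝ) *
    ((∑ k ∈ (range (nm i)).attach, bartK p w P (d+1) (Function.update nm i k.1) n0 np) +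
     (∑ k ∈ (range (np i)).attach, bartK p w P (d+1) nm n0 (Function.update np i k.1)))

noncomputable def bartSplitAverage (p : ℕ) (w : Fin p → ℝ) (P : ℕ → ℝ) (d : ℕ)
    (nm n0 np : Fin p → ℕ) : ℝ :=
  1 / bartW p w (fun i => nm i + n0 i + np i) *
    ∑ i ∈ univ.filter (fun i => nm i + n0 i + np i ≠ 0), bartAxisTerm p w P d nm n0 np i

lemma bartK_of_forall_eq_zero {d : ℕ} {nm n0 np : Fin p → ℕ}
    (h : ∀ i, nm i + n0 i + np i = 0) : bartK p w P d nm n0 np = 1 := by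
  rw [bartK, if_pos h]

lemma bartK_of_not_forall_eq_zero {d : ℕ} {nm n0 np : Fin p → ℕ}
    (h : ¬ ∀ i, nm i + n0 i + np i = 0) :
    bartK p w P d nm n0 np = 1 - P d * (1 - bartSplitAverage p w P d nm n0 np) := by
  rw [bartK, if_neg h]
  rfl

lemma bartAxisTerm_eq_zero {d : ℕ} {nm n0 np : Fin p → ℕ} {i : Fin p}
    (hm : nm i = 0) (hp : np i = 0) : bartAxisTerm p w P d nm n0 np i = 0 := by
  rw [bartAxisTerm, hm, hp]
  simp

lemma bartAxisTerm_mem_Icc {d : ℕ} {nm n0 np : Fin p → ℕ} {i : Fin p} (hw : 0 ≤ w i)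
    (hn : nm i + n0 i + np i ≠ 0)
    (hm : ∀ k : range (nm i), bartK p w P (d+1) (Function.update nm i k) n0 np ∈ Set.Icc 0 1)
    (hp : ∀ k : range (np i), bartK p w P (d+1) nm n0 (Function.update np i k) ∈ Set.Icc 0 1) :
    bartAxisTerm p w P d nm n0 np i ∈ Set.Icc 0 (w i) := by
  have hA := sum_attach_mem_Icc_card hm
  have hB := sum_attach_mem_Icc_card hp
  rw [card_range] at hA hB
  have hn' : (0 : ℝ) < ((nm i + n0 i + np i : ℕ) : ℝ) := by
    exact_mod_cast Nat.pos_of_ne_zero hn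
  have hwn : 0 ≤ w i / ((nm i + n0 i + np i : ℕ) : ℝ) := div_nonneg hw hn'.le
  refine ⟨mul_nonneg hwn (add_nonneg hA.1 hB.1), ?_⟩
  calc bartAxisTerm p w P d nm n0 np i
      ≤ w i / ((nm i + n0 i + np i : ℕ) : ℝ) * ((nm i + n0 i + np i : ℕ) : ℝ) := by
        refine mul_le_mul_of_nonneg_left ?_ hwn
        push_cast
        linarith [hA.2, hB.2, (n0 i).cast_nonneg (α := ℝ)]
    _ = w i := div_mul_cancel₀ _ hn'.ne'

lemma bartK_mem_Icc (hw : ∀ i, 0 ≤ w i) (hP : ∀ d, P d ∈ Set.Icc (0 : ℝ) 1)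
    (d : ℕ) (nm n0 np : Fin p → ℕ) : bartK p w P d nm n0 np ∈ Set.Icc 0 1 := by
  induction d, nm, np using bartK.induct p n0 with
  | case1 d nm np h => rw [bartK_of_forall_eq_zero h]; exact Set.right_mem_Icc.mpr zero_le_one
  | case2 d nm np h ihm ihp =>
    rw [bartK_of_not_forall_eq_zero h]
    refine Set.Icc.mem_iff_one_sub_mem.mp
      (unitInterval.mul_mem (hP d) (Set.Icc.mem_iff_one_sub_mem.mp ?_))
    exact one_div_sum_mul_sum_mem_Icc fun i hi =>
      bartAxisTerm_mem_Icc (hw i) (mem_filter.mp hi).2 (ihm i) (ihp i)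

lemma bartAxisTerm_antitone_interior (hw : ∀ i, 0 ≤ w i)
    (hP : ∀ d, P d ∈ Set.Icc (0 : ℝ) 1)
    {d : ℕ} {nm n0' n0 np : Fin p → ℕ} {i : Fin p} (h0 : n0 i ≤ n0' i)
    (hn : nm i + n0 i + np i ≠ 0)
    (hm : ∀ k : range (nm i), bartK p w P (d+1) (Function.update nm i k) n0' np ≤
      bartK p w P (d+1) (Function.update nm i k) n0 np)
    (hp : ∀ k : range (np i), bartK p w P (d+1) nm n0' (Function.update np i k) ≤
      bartK p w P (d+1) nm n0 (Function.update np i k)) :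
    bartAxisTerm p w P d nm n0' np i ≤ bartAxisTerm p w P d nm n0 np i := by
  have hn' : (0 : ℝ) < ((nm i + n0 i + np i : ℕ) : ℝ) := by
    exact_mod_cast Nat.pos_of_ne_zero hn
  have hweight :
      w i / ((nm i + n0' i + np i : ℕ) : ℝ) ≤ w i / ((nm i + n0 i + np i : ℕ) : ℝ) :=
    div_le_div_of_nonneg_left (hw i) hn' (by exact_mod_cast (by omega))
  have hsum_nonneg : 0 ≤
      (∑ k ∈ (range (nm i)).attach, bartK p w P (d+1) (Function.update nm i k.1) n0' np) +
      (∑ k ∈ (range (np i)).attach, bartK p w P (d+1) nm n0' (Function.update np i k.1)) :=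
    add_nonneg (sum_nonneg fun _ _ => (bartK_mem_Icc hw hP _ _ _ _).1)
      (sum_nonneg fun _ _ => (bartK_mem_Icc hw hP _ _ _ _).1)
  exact mul_le_mul hweight
    (add_le_add (sum_le_sum fun k _ => hm k) (sum_le_sum fun k _ => hp k)) hsum_nonneg
    (div_nonneg (hw i) hn'.le)

lemma bartSplitAverage_antitone_interior (hw : ∀ i, 0 < w i)
    (hP : ∀ d, P d ∈ Set.Icc (0 : ℝ) 1) {d : ℕ} {nm n0' n0 np : Fin p → ℕ}
    (h0 : ∀ i, n0 i ≤ n0' i) (h : ¬ ∀ i, nm i + n0 i + np i = 0)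
    (hm : ∀ i (k : range (nm i)), bartK p w P (d+1) (Function.update nm i k) n0' np ≤
      bartK p w P (d+1) (Function.update nm i k) n0 np)
    (hp : ∀ i (k : range (np i)), bartK p w P (d+1) nm n0' (Function.update np i k) ≤
      bartK p w P (d+1) nm n0 (Function.update np i k)) :
    bartSplitAverage p w P d nm n0' np ≤ bartSplitAverage p w P d nm n0 np := by
  have hw' : ∀ i, 0 ≤ w i := fun i => (hw i).le
  set s := univ.filter (fun i => nm i + n0 i + np i ≠ 0)
  set s' := univ.filter (fun i => nm i + n0' i + np i ≠ 0)
  have hss' : s ⊆ s' := monotone_filter_right _ fun i hi => by have := h0 i; omega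
  -- an axis that is empty for `n0` but not for `n0'` has no left or right split positions
  have hsum : ∑ i ∈ s', bartAxisTerm p w P d nm n0' np i =
      ∑ i ∈ s, bartAxisTerm p w P d nm n0' np i := by
    refine (sum_subset hss' fun i _ hi => bartAxisTerm_eq_zero ?_ ?_).symm <;>
      · simp only [s, mem_filter, mem_univ, true_and, not_not] at hi; omega
  have hW : 0 < bartW p w (fun i => nm i + n0 i + np i) := bartW_pos hw h
  have hWW' : bartW p w (fun i => nm i + n0 i + np i) ≤
      bartW p w (fun i => nm i + n0' i + np i) :=
    sum_le_sum_of_subset_of_nonneg hss' fun i _ _ => hw' i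
  have hnonneg : ∀ i ∈ s, 0 ≤ bartAxisTerm p w P d nm n0 np i := fun i hi =>
    (bartAxisTerm_mem_Icc (hw' i) (mem_filter.mp hi).2
      (fun _ => bartK_mem_Icc hw' hP _ _ _ _) (fun _ => bartK_mem_Icc hw' hP _ _ _ _)).1
  have hle : ∀ i ∈ s, bartAxisTerm p w P d nm n0' np i ≤ bartAxisTerm p w P d nm n0 np i :=
    fun i hi => bartAxisTerm_antitone_interior hw' hP (h0 i) (mem_filter.mp hi).2 (hm i) (hp i)
  rw [bartSplitAverage, bartSplitAverage, hsum, one_div_mul_eq_div, one_div_mul_eq_div]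
  exact div_le_div₀ (sum_nonneg hnonneg) (sum_le_sum hle) hW hWW'

end

theorem bartK_antitone_interior_general
    (p : ℕ) (w : Fin p → ℝ) (hw : ∀ i, 0 < w i)
    (P : ℕ → ℝ) (hP : ∀ d, P d ∈ Set.Icc (0 : ℝ) 1)
    (d : ℕ) (n0' n0 : Fin p → ℕ) (h0 : ∀ i, n0 i ≤ n0' i) (nm np : Fin p → ℕ) :
    bartK p w P d nm n0' np ≤ bartK p w P d nm n0 np := by
  induction d, nm, np using bartK.induct p n0 with
  | case1 d nm np h =>
    rw [bartK_of_forall_eq_zero h]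
    exact (bartK_mem_Icc (fun i => (hw i).le) hP d nm n0' np).2
  | case2 d nm np h ihm ihp =>
    have h' : ¬ ∀ i, nm i + n0' i + np i = 0 := fun h' => h fun i => by
      have := h' i; have := h0 i; omega
    rw [bartK_of_not_forall_eq_zero h, bartK_of_not_forall_eq_zero h']
    have hQ := bartSplitAverage_antitone_interior hw hP h0 h ihm ihp
    exact sub_le_sub_left (mul_le_mul_of_nonneg_left (sub_le_sub_left hQ 1) (hP d).1) 1

/-- Property 7 of Theorem 2: `k_d` is monotonically non-increasing in the interior
split counts `n⁰`. -/
theorem bartK_antitone_interior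
    (p : ℕ) (hp : 1 ≤ p) (w : Fin p → ℝ) (hw : ∀ i, 0 < w i)
    (P : ℕ → ℝ) (hP : ∀ d, P d ∈ Set.Icc (0 : ℝ) 1)
    (d : ℕ) (n0' n0 : Fin p → ℕ) (h0 : ∀ i, n0 i ≤ n0' i) (nm np : Fin p → ℕ) :
    bartK p w P d nm n0' np ≤ bartK p w P d nm n0 np :=
  bartK_antitone_interior_general p w hw P hP d n0' n0 h0 nm np
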